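/- arXiv:0808.1533 — 2 statements merged into one kernel-verified Lean document; each statement's English description precedes it below -/
import Mathlib

section
/- Let T be a compact domain with smooth boundary in a product of three oriented 3-manifolds, of the form T = T₁×T₂×T₃, and suppose each Bᵢ is a divergence-free vector field tangent to ∂Tᵢ. If β is a closed 1-form and α a smooth 1-form on T, then ∫_T (β ∧ dα) ∧ ι_{B₁}μ₁ ∧ ι_{B₂}μ₂ ∧ ι_{B₃}μ₃ = 0. -/
/-!
Since `β` and the `wᵢ` are closed, the graded Leibniz rule gives
`d (β ∧ α ∧ w₀ ∧ w₁ ∧ w₂) = -(β ∧ dα ∧ w₀ ∧ w₁ ∧ w₂)`. By Stokes the left side integrates to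
the boundary terms, and the restriction to the `i`-th face contains the factor `rᵢ wᵢ = 0`.
-/

section GradedLeibniz

variable {R A : Type*} [CommRing R] [Ring A] [Algebra R A] {G : ℕ → Submodule R A}
  {d : A →ₗ[R] A}
  (hLeibniz : ∀ {p : ℕ} (x y : A), x ∈ G p →
    d (x * y) = d x * y + ((-1 : R) ^ p) • (x * d y))
include hLeibniz

theorem d_mul_of_d_right_eq_zero {p : ℕ} {x y : A} (hx : x ∈ G p) (hy : d y = 0) :
    d (x * y) = d x * y := by
  rw [hLeibniz x y hx, hy, mul_zero, smul_zero, add_zero]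

theorem d_mul_of_d_left_eq_zero {p : ℕ} {x y : A} (hx : x ∈ G p) (hxc : d x = 0) :
    d (x * y) = ((-1 : R) ^ p) • (x * d y) := by
  rw [hLeibniz x y hx, hxc, zero_mul, zero_add]

theorem d_mul_eq_zero {p : ℕ} {x y : A} (hx : x ∈ G p) (hxc : d x = 0) (hy : d y = 0) :
    d (x * y) = 0 := by
  rw [d_mul_of_d_right_eq_zero hLeibniz hx hy, hxc, zero_mul]

end GradedLeibniz

theorem integral_d_eq_zero_of_restrict_eq_zero {R A : Type*} {ι : Type*} [Fintype ι]
    [CommSemiring R] [Semiring A] [Algebra R A] {B : ι → Type*} [∀ i, Semiring (B i)]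
    [∀ i, Algebra R (B i)] {d : A →ₗ[R] A} {r : ∀ i, A →ₐ[R] B i} {intT : A →ₗ[R] R}
    {intBdry : ∀ i, B i →ₗ[R] R} (hStokes : ∀ x : A, intT (d x) = ∑ i, intBdry i (r i x))
    {x : A} (hx : ∀ i, r i x = 0) : intT (d x) = 0 := by
  simp only [hStokes, hx, map_zero, Finset.sum_const_zero]

/-- Let `T = T₁ × T₂ × T₃` be a compact domain with smooth boundary in a
product of three oriented 3-manifolds, and `A` its graded algebra of differential forms
(graded by `G`, wedge = `*`), with exterior derivative `d` satisfying the graded Leibniz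
rule and Stokes' theorem `∫_T dξ = Σᵢ ∫_{∂ᵢT} ξ|_{∂ᵢT}`, where
`∂T = (∂T₁×T₂×T₃) ∪ (T₁×∂T₂×T₃) ∪ (T₁×T₂×∂T₃)` and `rᵢ` is restriction to the `i`-th
boundary face.  Suppose each `Bᵢ` is divergence free (`d(ι_{Bᵢ}μᵢ) = 0`) and tangent to
`∂Tᵢ` (the restriction of `ι_{Bᵢ}μᵢ` to the `i`-th boundary face vanishes).  If `β` is a
closed 1-form and `α` a smooth 1-form on `T`, then
`∫_T (β ∧ dα) ∧ ι_{B₁}μ₁ ∧ ι_{B₂}μ₂ ∧ ι_{B₃}μ₃ = 0`. -/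
theorem closed_one_form_pairing_vanishes
    {A : Type*} [Ring A] [Algebra ℝ A]
    {Abd : Fin 3 → Type*} [∀ i, Ring (Abd i)] [∀ i, Algebra ℝ (Abd i)]
    (G : ℕ → Submodule ℝ A)               -- grading of forms by degree
    (d : A →ₗ[ℝ] A)                        -- exterior derivative
    (hLeibniz : ∀ {p : ℕ} (x y : A), x ∈ G p →
      d (x * y) = d x * y + ((-1 : ℝ) ^ p) • (x * d y))
    (r : ∀ i, A →ₐ[ℝ] Abd i)                -- restriction to the i-th boundary face
    (intT : A →ₗ[ℝ] ℝ)                     -- integration over T (of 9-forms)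
    (intBdry : ∀ i, Abd i →ₗ[ℝ] ℝ)          -- integration over the boundary faces
    (hStokes : ∀ x : A, intT (d x) = ∑ i, intBdry i (r i x))
    (β α : A) (hβ : β ∈ G 1) (hα : α ∈ G 1)
    (hβclosed : d β = 0)
    (w : Fin 3 → A)                        -- the 2-forms ι_{Bᵢ}μᵢ
    (hw : ∀ i, w i ∈ G 2)
    (hdiv : ∀ i, d (w i) = 0)              -- the Bᵢ are divergence free
    (htang : ∀ i, r i (w i) = 0) :         -- the Bᵢ are tangent to ∂Tᵢ
    intT (β * d α * (w 0 * w 1 * w 2)) = 0 := by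
  set W := w 0 * (w 1 * w 2)
  have hW : d W = 0 :=
    d_mul_eq_zero hLeibniz (hw 0) (hdiv 0) (d_mul_eq_zero hLeibniz (hw 1) (hdiv 1) (hdiv 2))
  have hexact : d (β * (α * W)) = -(β * (d α * W)) := by
    rw [d_mul_of_d_left_eq_zero hLeibniz hβ hβclosed, d_mul_of_d_right_eq_zero hLeibniz hα hW,
      pow_one, neg_one_smul]
  have hrestrict : ∀ i, r i (β * (α * W)) = 0 := by
    intro i
    fin_cases i <;> simp [W, htang]
  have hzero := integral_d_eq_zero_of_restrict_eq_zero hStokes hrestrict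
  rw [hexact, map_neg, neg_eq_zero] at hzero
  simpa only [W, mul_assoc] using hzero
end

section
/- Let M be a compact oriented Riemannian manifold with boundary, and let ω be a smooth closed k-form on M that is L²-orthogonal to the space of Neumann harmonic fields H^k_N(M) = {λ : dλ = 0, δλ = 0, n(λ) = 0}. If φ solves the Neumann problem Δφ = ω with n(φ) = 0 and n(dφ) = 0, then ω = d(δφ); in particular ω is exact with explicit potential δφ. -/
/-!
Write `ψ := δdφ`, so that `ω - dδφ = ψ`. Then `ψ` is a Neumann harmonic field: it is closed
because `ω` and `dδφ` are, coclosed because `δδ = 0`, and `nψ = 0` because `n(dφ) = 0`.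
Hence `ψ ⊥ ω` by hypothesis, and `ψ ⊥ dδφ` by Green's formula since `δψ = 0` and `nψ = 0`.
So `ψ` is orthogonal to `ω - dδφ = ψ` itself, and vanishes.
-/

open scoped InnerProductSpace

section RCLike

variable {𝕜 : Type*} [RCLike 𝕜]

theorem eq_of_inner_sub_right_eq_zero {E : Type*} [NormedAddCommGroup E] [InnerProductSpace 𝕜 E]
    {x y : E} (hx : ⟪x, x - y⟫_𝕜 = 0) (hy : ⟪y, x - y⟫_𝕜 = 0) : x = y :=
  sub_eq_zero.mp <| (inner_self_eq_zero (𝕜 := 𝕜)).mp <| by rw [inner_sub_left, hx, hy, sub_zero]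

theorem inner_apply_eq_zero_of_green {A B N : Type*}
    [NormedAddCommGroup A] [InnerProductSpace 𝕜 A] [NormedAddCommGroup B] [InnerProductSpace 𝕜 B]
    [AddCommGroup N] [Module 𝕜 N] {d : A →ₗ[𝕜] B} {δ : B →ₗ[𝕜] A} {n : B →ₗ[𝕜] N}
    (hGreen : ∀ (α : A) (β : B), n β = 0 → ⟪d α, β⟫_𝕜 = ⟪α, δ β⟫_𝕜)
    {β : B} (hδ : δ β = 0) (hn : n β = 0) (α : A) : ⟪d α, β⟫_𝕜 = 0 := by
  rw [hGreen α β hn, hδ, inner_zero_right]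

end RCLike

theorem neumann_problem_gives_exact_potential_general
    {A B C : Type*}
    [NormedAddCommGroup A] [InnerProductSpace ℝ A]
    [NormedAddCommGroup B] [InnerProductSpace ℝ B]
    [NormedAddCommGroup C] [InnerProductSpace ℝ C]
    {NB NC : Type*} [AddCommGroup NB] [Module ℝ NB] [AddCommGroup NC] [Module ℝ NC]
    (dA : A →ₗ[ℝ] B) (dB : B →ₗ[ℝ] C)        -- exterior derivative
    (δB : B →ₗ[ℝ] A) (δC : C →ₗ[ℝ] B)        -- codifferential
    (nB : B →ₗ[ℝ] NB) (nC : C →ₗ[ℝ] NC)      -- normal component at the boundary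
    (hdd : ∀ a : A, dB (dA a) = 0)
    (hδδ : ∀ c : C, δB (δC c) = 0)
    (hGreenB : ∀ (α : A) (β : B), nB β = 0 → ⟪dA α, β⟫_ℝ = ⟪α, δB β⟫_ℝ)
    (hnδ : ∀ c : C, nC c = 0 → nB (δC c) = 0)
    (ω : B)
    (hclosed : dB ω = 0)
    (horth : ∀ lam : B, dB lam = 0 → δB lam = 0 → nB lam = 0 → ⟪ω, lam⟫_ℝ = 0)
    (φ : B)
    (hNeumann₂ : nC (dB φ) = 0)
    (hΔ : dA (δB φ) + δC (dB φ) = ω) :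
    ω = dA (δB φ) := by
  have hψ : ω - dA (δB φ) = δC (dB φ) := by rw [← hΔ, add_sub_cancel_left]
  have hd : dB (δC (dB φ)) = 0 := by rw [← hψ, map_sub, hclosed, hdd, sub_zero]
  have hδ : δB (δC (dB φ)) = 0 := hδδ _
  have hn : nB (δC (dB φ)) = 0 := hnδ _ hNeumann₂
  refine eq_of_inner_sub_right_eq_zero (𝕜 := ℝ) ?_ ?_ <;> rw [hψ]
  · exact horth _ hd hδ hn
  · exact inner_apply_eq_zero_of_green hGreenB hδ hn _

/-- (Abstract Neumann problem: explicit potential for an exact form.)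
Let `A, B, C` be the spaces of smooth `(k−1)`-, `k`- and `(k+1)`-forms on a compact
oriented Riemannian manifold with boundary with their `L²` inner products, `d` the
exterior derivative (with `d ∘ d = 0`), `δ` the codifferential (with `δ ∘ δ = 0`), and `n`
the normal component at the boundary.  Suppose Green's formula `⟪dα, β⟫ = ⟪α, δβ⟫` holds
whenever `nβ = 0`, and that `δ` preserves the vanishing of the normal component.
Let `ω` be a closed `k`-form that is `L²`-orthogonal to the Neumann harmonic fields
`H^k_N = {λ : dλ = 0, δλ = 0, nλ = 0}`.  If `φ` solves the Neumann problem
`Δφ = dδφ + δdφ = ω` with `nφ = 0`, `n(dφ) = 0`, then `ω = d(δφ)`; in particular `ω` is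
exact with explicit potential `δφ`. -/
theorem neumann_problem_gives_exact_potential
    {A B C : Type*}
    [NormedAddCommGroup A] [InnerProductSpace ℝ A]
    [NormedAddCommGroup B] [InnerProductSpace ℝ B]
    [NormedAddCommGroup C] [InnerProductSpace ℝ C]
    {NB NC : Type*} [AddCommGroup NB] [Module ℝ NB] [AddCommGroup NC] [Module ℝ NC]
    (dA : A →ₗ[ℝ] B) (dB : B →ₗ[ℝ] C)        -- exterior derivative
    (δB : B →ₗ[ℝ] A) (δC : C →ₗ[ℝ] B)        -- codifferential
    (nB : B →ₗ[ℝ] NB) (nC : C →ₗ[ℝ] NC)      -- normal component at the boundary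
    (hdd : ∀ a : A, dB (dA a) = 0)
    (hδδ : ∀ c : C, δB (δC c) = 0)
    (hGreenB : ∀ (α : A) (β : B), nB β = 0 → ⟪dA α, β⟫_ℝ = ⟪α, δB β⟫_ℝ)
    (hGreenC : ∀ (α : B) (β : C), nC β = 0 → ⟪dB α, β⟫_ℝ = ⟪α, δC β⟫_ℝ)
    (hnδ : ∀ c : C, nC c = 0 → nB (δC c) = 0)
    (ω : B)
    (hclosed : dB ω = 0)
    (horth : ∀ lam : B, dB lam = 0 → δB lam = 0 → nB lam = 0 → ⟪ω, lam⟫_ℝ = 0)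
    (φ : B)
    (hNeumann₁ : nB φ = 0)
    (hNeumann₂ : nC (dB φ) = 0)
    (hΔ : dA (δB φ) + δC (dB φ) = ω) :
    ω = dA (δB φ) :=
  neumann_problem_gives_exact_potential_general dA dB δB δC nB nC hdd hδδ hGreenB hnδ ω hclosed
    horth φ hNeumann₂ hΔ
end
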